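/- For every ε with 0 < ε ≤ 1/cost(z) − 1 where z is feasible for IP(k, μ), there exists a feasible sequence X for the knapsack problem with ∑ f_k(x) ≥ score(z, k, μ) − με·cost(z). Hence sup LP(k, μ) ≥ opt IP(k, μ), and combined with the reverse inequality, sup LP(k, μ) = opt IP(k, μ). -/

import Mathlib

/-- cost of an integer solution to IP(k, μ). -/
noncomputable def IPcost (k : ℕ) (z : ℕ → ℕ) : ℝ :=
  ∑ j ∈ Finset.Icc 1 (k - 1), (z j : ℝ) / ((j : ℝ) + 1)

/-- objective value of an integer solution to IP(k, μ). -/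
noncomputable def IPscore (k : ℕ) (μ : ℝ) (z : ℕ → ℕ) : ℝ :=
  μ + ∑ j ∈ Finset.Icc 1 (k - 1), (z j : ℝ) * (1 / (j : ℝ) - μ / ((j : ℝ) + 1))

/-- optimum of IP(k, μ). -/
noncomputable def IPopt (k : ℕ) (μ : ℝ) : ℝ :=
  sSup {s | ∃ z : ℕ → ℕ, IPcost k z < 1 ∧ s = IPscore k μ z}

/-- LP(k, μ): sup of ∑ f(xᵢ) over finite sequences in [0,1] with sum ≤ 1. -/
noncomputable def LPopt (f : ℝ → ℝ) : ℝ :=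
  sSup {s | ∃ n : ℕ, ∃ X : Fin n → ℝ,
    (∀ i, X i ∈ Set.Icc (0 : ℝ) 1) ∧ (∑ i, X i) ≤ 1 ∧ s = ∑ i, f (X i)}

/-!
An LP-feasible packing is rounded to an IP solution by replacing every item `x > 1 / k` with
`1 / (j + 1)`, where `j = ⌊1 / x⌋`: this keeps `f x = 1 / j`, does not increase the total size,
and the small items are worth `μ` per unit of size, at most `μ (1 - cost)` in total. Conversely
an IP solution `z` is realised by `z j` items of size `(1 + ε) / (j + 1)`, still worth `1 / j`
each, plus small items filling the remaining space; this loses only `μ ε cost(z)`, and letting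
`ε → 0` gives equality of the two optima.
-/

open Finset Set Filter Topology

-- `f` agrees with the paper's `f_k` on `[0, 1]`.
structure IsHarmonicProfile (k : ℕ) (μ : ℝ) (f : ℝ → ℝ) : Prop where
  eq_inv : ∀ j : ℕ, 1 ≤ j → j ≤ k - 1 →
    ∀ x ∈ Ioc (1 / ((j : ℝ) + 1)) (1 / (j : ℝ)), f x = 1 / (j : ℝ)
  eq_mul : ∀ x ∈ Icc (0 : ℝ) (1 / (k : ℝ)), f x = μ * x

-- `IPopt k μ = sSup (IPValues k μ)` and `LPopt f = sSup (LPValues f)` hold by `rfl`.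
def IPValues (k : ℕ) (μ : ℝ) : Set ℝ :=
  {s | ∃ z : ℕ → ℕ, IPcost k z < 1 ∧ s = IPscore k μ z}

def LPValues (f : ℝ → ℝ) : Set ℝ :=
  {s | ∃ n : ℕ, ∃ X : Fin n → ℝ,
    (∀ i, X i ∈ Icc (0 : ℝ) 1) ∧ (∑ i, X i) ≤ 1 ∧ s = ∑ i, f (X i)}

lemma IPcost_nonneg (k : ℕ) (z : ℕ → ℕ) : 0 ≤ IPcost k z :=
  sum_nonneg fun _ _ ↦ by positivity

lemma IPscore_eq (k : ℕ) (μ : ℝ) (z : ℕ → ℕ) :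
    IPscore k μ z = ∑ j ∈ Icc 1 (k - 1), (z j : ℝ) / j + μ * (1 - IPcost k z) := by
  rw [IPscore, IPcost, mul_sub, mul_one, mul_sum, add_sub_left_comm, ← sum_sub_distrib]
  exact congrArg (μ + ·) (sum_congr rfl fun _ _ ↦ by ring)

lemma IPscore_le (k : ℕ) {μ : ℝ} (hμ : 0 ≤ μ) (z : ℕ → ℕ) :
    IPscore k μ z ≤ μ + 2 * IPcost k z := by
  have hinv : ∑ j ∈ Icc 1 (k - 1), (z j : ℝ) / j ≤ 2 * IPcost k z := by
    rw [IPcost, mul_sum]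
    refine sum_le_sum fun j hj ↦ ?_
    have hj : (1 : ℝ) ≤ j := by exact_mod_cast (Finset.mem_Icc.1 hj).1
    have h : (1 : ℝ) / j ≤ 2 / (j + 1) := by
      rw [div_le_div_iff₀ (by linarith) (by linarith)]; linarith
    calc (z j : ℝ) / j = z j * (1 / j) := by ring
      _ ≤ z j * (2 / (j + 1)) := by gcongr
      _ = 2 * (z j / (j + 1)) := by ring
  rw [IPscore_eq]
  nlinarith [IPcost_nonneg k z]

lemma bddAbove_IPValues (k : ℕ) {μ : ℝ} (hμ : 0 ≤ μ) : BddAbove (IPValues k μ) := by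
  refine ⟨μ + 2, ?_⟩
  rintro s ⟨z, hz, rfl⟩
  linarith [IPscore_le k hμ z]

lemma sum_mem_LPValues {ι : Type*} [Fintype ι] (f : ℝ → ℝ) (X : ι → ℝ)
    (hX : ∀ i, X i ∈ Icc (0 : ℝ) 1) (hs : ∑ i, X i ≤ 1) :
    ∑ i, f (X i) ∈ LPValues f := by
  set e := Fintype.equivFin ι
  refine ⟨Fintype.card ι, X ∘ e.symm, fun i ↦ hX _, ?_, ?_⟩ <;>
    simp only [Function.comp_apply, e.symm.sum_comp (fun i ↦ X i),
      e.symm.sum_comp (fun i ↦ f (X i)), hs]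

lemma one_add_div_mem_Ioc {j ε : ℝ} (hj : 0 < j) (hε : 0 < ε) (hjε : j * ε ≤ 1) :
    (1 + ε) / (j + 1) ∈ Ioc (1 / (j + 1)) (1 / j) := by
  constructor
  · gcongr; linarith
  · rw [div_le_div_iff₀ (by linarith) hj]; linarith

lemma one_add_div_mem_Ioc_of_mem_Icc {k j : ℕ} {ε : ℝ} (hj : j ∈ Finset.Icc 1 (k - 1))
    (hε : 0 < ε) (hεk : ε ≤ 1 / k) :
    (1 + ε) / ((j : ℝ) + 1) ∈ Ioc (1 / ((j : ℝ) + 1)) (1 / j) := by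
  obtain ⟨hj1, hjk⟩ := Finset.mem_Icc.1 hj
  have hjk' : (j : ℝ) ≤ k := by exact_mod_cast (by omega : j ≤ k)
  have hk : (0 : ℝ) < k := by linarith [(Nat.one_le_cast (α := ℝ)).2 hj1]
  refine one_add_div_mem_Ioc (by positivity) hε ?_
  calc (j : ℝ) * ε ≤ k * (1 / k) := by gcongr
    _ = 1 := mul_one_div_cancel hk.ne'

lemma one_le_floor_inv {x : ℝ} (hx : 0 < x) (hx1 : x ≤ 1) : 1 ≤ ⌊x⁻¹⌋₊ :=
  Nat.le_floor (by simpa using one_le_inv_iff₀.2 ⟨hx, hx1⟩)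

lemma mem_Ioc_one_div_floor_inv {x : ℝ} (hx : 0 < x) (hx1 : x ≤ 1) :
    x ∈ Ioc (1 / ((⌊x⁻¹⌋₊ : ℝ) + 1)) (1 / ⌊x⁻¹⌋₊) := by
  have hb : (0 : ℝ) < ⌊x⁻¹⌋₊ := by exact_mod_cast one_le_floor_inv hx hx1
  constructor
  · rw [one_div_lt (by positivity) hx, one_div]
    exact Nat.lt_floor_add_one _
  · rw [le_one_div hx hb, one_div]
    exact Nat.floor_le (by positivity)

lemma floor_inv_mem_Icc {k : ℕ} {x : ℝ} (hk : 0 < k) (hkx : 1 / (k : ℝ) < x) (hx1 : x ≤ 1) :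
    ⌊x⁻¹⌋₊ ∈ Finset.Icc 1 (k - 1) := by
  have hx : 0 < x := lt_trans (by positivity) hkx
  have hlt : ⌊x⁻¹⌋₊ < k := by
    refine (Nat.floor_lt (by positivity)).2 ?_
    rwa [one_div, inv_lt_comm₀ (by positivity) hx] at hkx
  exact Finset.mem_Icc.2 ⟨one_le_floor_inv hx hx1, by omega⟩

lemma le_of_forall_sub_mul_le {a b L ε₀ : ℝ} (hε₀ : 0 < ε₀)
    (h : ∀ ε, 0 < ε → ε ≤ ε₀ → a - ε * b ≤ L) : a ≤ L := by
  have ht : Tendsto (fun ε ↦ a - ε * b) (𝓝[>] 0) (𝓝 a) := by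
    have hcont : Continuous fun ε : ℝ ↦ a - ε * b := by fun_prop
    simpa using (hcont.tendsto 0).mono_left nhdsWithin_le_nhds
  refine le_of_tendsto ht ?_
  filter_upwards [Ioo_mem_nhdsGT hε₀] with ε hε using h ε hε.1 hε.2.le

lemma mem_IPValues_self (k : ℕ) (μ : ℝ) : μ ∈ IPValues k μ :=
  ⟨0, by simp [IPcost], by simp [IPscore]⟩

lemma zero_mem_LPValues (f : ℝ → ℝ) : 0 ∈ LPValues f :=
  ⟨0, Fin.elim0, fun i ↦ i.elim0, by simp, by simp⟩

namespace IsHarmonicProfile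

variable {k : ℕ} {μ : ℝ} {f : ℝ → ℝ}

theorem IPscore_sub_mem_LPValues (hf : IsHarmonicProfile k μ f) (hk : 0 < k) {z : ℕ → ℕ}
    {ε : ℝ} (hε : 0 < ε) (hεk : ε ≤ 1 / k) (hc : (1 + ε) * IPcost k z ≤ 1) :
    IPscore k μ z - μ * ε * IPcost k z ∈ LPValues f := by
  set c := IPcost k z with hc_def
  set y := 1 - (1 + ε) * c with hy_def
  have hk' : (0 : ℝ) < k := by exact_mod_cast hk
  have hy : y / k ∈ Icc 0 (1 / (k : ℝ)) :=
    ⟨div_nonneg (by linarith) hk'.le, by gcongr; nlinarith [IPcost_nonneg k z]⟩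
  have hx : ∀ j ∈ Finset.Icc 1 (k - 1),
      (1 + ε) / ((j : ℝ) + 1) ∈ Ioc (1 / ((j : ℝ) + 1)) (1 / j) :=
    fun j hj ↦ one_add_div_mem_Ioc_of_mem_Icc hj hε hεk
  -- `z j` items of size `(1 + ε) / (j + 1)` for each `j`; the free space `y` split into `k` items
  let X : (Σ j : Finset.Icc 1 (k - 1), Fin (z j)) ⊕ Fin k → ℝ :=
    Sum.elim (fun p ↦ (1 + ε) / ((p.1 : ℝ) + 1)) (fun _ ↦ y / k)
  have hsum : ∀ g : ℝ → ℝ, ∑ i, g (X i) =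
      ∑ j ∈ Finset.Icc 1 (k - 1), z j * g ((1 + ε) / ((j : ℝ) + 1)) + k * g (y / k) := by
    intro g
    simp [X, Fintype.sum_sum_type, Fintype.sum_sigma, Finset.sum_attach (Finset.Icc 1 (k - 1))
      (fun j ↦ (z j : ℝ) * g ((1 + ε) / ((j : ℝ) + 1)))]
  convert sum_mem_LPValues f X ?_ ?_ using 1
  · have hblocks : ∑ j ∈ Finset.Icc 1 (k - 1), z j * f ((1 + ε) / ((j : ℝ) + 1)) =
        ∑ j ∈ Finset.Icc 1 (k - 1), (z j : ℝ) / j := by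
      refine sum_congr rfl fun j hj ↦ ?_
      obtain ⟨hj1, hjk⟩ := Finset.mem_Icc.1 hj
      rw [hf.eq_inv j hj1 hjk _ (hx j hj), mul_one_div]
    rw [hsum f, hblocks, hf.eq_mul _ hy, IPscore_eq, hy_def]
    field_simp
    ring
  · rintro (⟨⟨j, hj⟩, -⟩ | -)
    · obtain ⟨h0, h1⟩ := hx j hj
      have hj1 : (1 : ℝ) ≤ j := by exact_mod_cast (Finset.mem_Icc.1 hj).1
      exact ⟨(lt_trans (by positivity) h0).le,
        h1.trans (div_le_one_of_le₀ hj1 (by positivity))⟩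
    · exact ⟨hy.1, hy.2.trans (div_le_one_of_le₀ (by exact_mod_cast hk) hk'.le)⟩
  · have hitems :
        ∑ j ∈ Finset.Icc 1 (k - 1), z j * ((1 + ε) / ((j : ℝ) + 1)) = (1 + ε) * c := by
      rw [hc_def, IPcost, mul_sum]
      exact sum_congr rfl fun _ _ ↦ by ring
    rw [show ∑ i, X i = _ from hsum id]
    simp only [id]
    rw [hitems, mul_div_cancel₀ _ hk'.ne', hy_def]
    linarith

theorem exists_le_IPscore (hf : IsHarmonicProfile k μ f) (hk : 0 < k) (hμ : 0 ≤ μ) {n : ℕ}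
    {X : Fin n → ℝ} (hX : ∀ i, X i ∈ Icc (0 : ℝ) 1) (hs : ∑ i, X i ≤ 1) :
    ∃ z : ℕ → ℕ, IPcost k z < 1 ∧ ∑ i, f (X i) ≤ IPscore k μ z := by
  classical
  -- items larger than `1 / k` are rounded down to `1 / (j + 1)` with `j = ⌊1 / x⌋`
  set S : Finset (Fin n) := {i | 1 / (k : ℝ) < X i}
  set b : Fin n → ℕ := fun i ↦ ⌊(X i)⁻¹⌋₊
  set z : ℕ → ℕ := fun j ↦ #{i ∈ S | b i = j}
  have hSpos : ∀ i ∈ S, 0 < X i := fun i hi ↦ lt_trans (by positivity) (mem_filter.1 hi).2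
  have hbS : ∀ i ∈ S, b i ∈ Finset.Icc 1 (k - 1) :=
    fun i hi ↦ floor_inv_mem_Icc hk (mem_filter.1 hi).2 (hX i).2
  have hXS : ∀ i ∈ S, X i ∈ Ioc (1 / ((b i : ℝ) + 1)) (1 / b i) :=
    fun i hi ↦ mem_Ioc_one_div_floor_inv (hSpos i hi) (hX i).2
  have hfib : ∀ g : ℕ → ℝ,
      ∑ j ∈ Finset.Icc 1 (k - 1), z j * g j = ∑ i ∈ S, g (b i) := by
    intro g
    rw [← sum_fiberwise_of_maps_to' hbS]
    simp [z, sum_const, nsmul_eq_mul]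
  have hcost : IPcost k z = ∑ i ∈ S, 1 / ((b i : ℝ) + 1) := by
    rw [IPcost, ← hfib fun j ↦ 1 / ((j : ℝ) + 1)]
    exact sum_congr rfl fun _ _ ↦ mul_one_div _ _ |>.symm
  have hcost_le : IPcost k z ≤ ∑ i ∈ S, X i :=
    hcost ▸ sum_le_sum fun i hi ↦ (hXS i hi).1.le
  have hSX : ∑ i ∈ S, X i ≤ 1 :=
    (sum_le_sum_of_subset_of_nonneg (subset_univ S) fun i _ _ ↦ (hX i).1).trans hs
  have hfS : ∑ i ∈ S, f (X i) = ∑ j ∈ Finset.Icc 1 (k - 1), (z j : ℝ) / j := by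
    rw [sum_congr rfl fun i hi ↦ hf.eq_inv (b i) (Finset.mem_Icc.1 (hbS i hi)).1
      (Finset.mem_Icc.1 (hbS i hi)).2 _ (hXS i hi), ← hfib fun j ↦ 1 / (j : ℝ)]
    exact sum_congr rfl fun _ _ ↦ mul_one_div _ _
  have hfSc : ∑ i ∈ Sᶜ, f (X i) = μ * ∑ i ∈ Sᶜ, X i := by
    rw [mul_sum]
    refine sum_congr rfl fun i hi ↦ hf.eq_mul _ ⟨(hX i).1, ?_⟩
    simpa [S] using hi
  refine ⟨z, ?_, ?_⟩
  · rcases S.eq_empty_or_nonempty with hS | hS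
    · simp [hcost, hS]
    · exact (hcost ▸ sum_lt_sum_of_nonempty hS fun i hi ↦ (hXS i hi).1).trans_le hSX
  · rw [← sum_add_sum_compl S, hfS, hfSc, IPscore_eq]
    have hSc : ∑ i ∈ Sᶜ, X i ≤ 1 - ∑ i ∈ S, X i := by
      linarith [sum_add_sum_compl S X]
    nlinarith

theorem exists_sum_ge_IPscore_sub (hf : IsHarmonicProfile k μ f) (hk : 0 < k) (hμ : 0 ≤ μ)
    {z : ℕ → ℕ} {ε : ℝ} (hε : 0 < ε) (hεc : ε ≤ 1 / IPcost k z - 1) :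
    ∃ n : ℕ, ∃ X : Fin n → ℝ, (∀ i, X i ∈ Icc (0 : ℝ) 1) ∧ (∑ i, X i) ≤ 1 ∧
      IPscore k μ z - μ * ε * IPcost k z ≤ ∑ i, f (X i) := by
  have hc : 0 < IPcost k z := by
    refine (IPcost_nonneg k z).lt_of_ne fun h ↦ ?_
    rw [← h, div_zero] at hεc
    linarith
  have hεc' : (1 + ε) * IPcost k z ≤ 1 := by
    rw [← le_div_iff₀ hc]
    linarith
  -- the items of size `(1 + ε) / (j + 1)` must still have `f = 1 / j`, which needs `ε ≤ 1 / k`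
  set ε' := min ε (1 / k)
  have hε' : ε' ≤ ε := min_le_left _ _
  obtain ⟨n, X, hX, hs, hsum⟩ := hf.IPscore_sub_mem_LPValues hk (lt_min hε (by positivity))
    (min_le_right _ _) ((mul_le_mul_of_nonneg_right (by linarith) hc.le).trans hεc')
  refine ⟨n, X, hX, hs, hsum ▸ ?_⟩
  gcongr

theorem bddAbove_LPValues (hf : IsHarmonicProfile k μ f) (hk : 0 < k) (hμ : 0 ≤ μ) :
    BddAbove (LPValues f) := by
  obtain ⟨M, hM⟩ := bddAbove_IPValues k hμ
  refine ⟨M, ?_⟩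
  rintro s ⟨n, X, hX, hs, rfl⟩
  obtain ⟨z, hz, hle⟩ := hf.exists_le_IPscore hk hμ hX hs
  exact hle.trans (hM ⟨z, hz, rfl⟩)

theorem LPopt_le_IPopt (hf : IsHarmonicProfile k μ f) (hk : 0 < k) (hμ : 0 ≤ μ) :
    LPopt f ≤ IPopt k μ := by
  refine csSup_le ⟨0, zero_mem_LPValues f⟩ ?_
  rintro s ⟨n, X, hX, hs, rfl⟩
  obtain ⟨z, hz, hle⟩ := hf.exists_le_IPscore hk hμ hX hs
  exact le_csSup_of_le (bddAbove_IPValues k hμ) ⟨z, hz, rfl⟩ hle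

theorem IPopt_le_LPopt (hf : IsHarmonicProfile k μ f) (hk : 0 < k) (hμ : 0 ≤ μ) :
    IPopt k μ ≤ LPopt f := by
  refine csSup_le ⟨μ, mem_IPValues_self k μ⟩ ?_
  rintro s ⟨z, hz, rfl⟩
  set c := IPcost k z
  have hc := IPcost_nonneg k z
  refine le_of_forall_sub_mul_le (b := μ * c) (ε₀ := min (1 / k) (1 - c))
    (lt_min (by positivity) (by linarith)) fun ε hε hεε₀ ↦ ?_
  have hεc : ε * c ≤ (1 - c) * c := by gcongr; exact hεε₀.trans (min_le_right _ _)
  have hmem := hf.IPscore_sub_mem_LPValues hk hε (hεε₀.trans (min_le_left _ _))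
    (by nlinarith : (1 + ε) * c ≤ 1)
  calc IPscore k μ z - ε * (μ * c) = IPscore k μ z - μ * ε * c := by ring
    _ ≤ LPopt f := le_csSup (hf.bddAbove_LPValues hk hμ) hmem

end IsHarmonicProfile

theorem IP_le_LP (k : ℕ) (μ : ℝ) (f : ℝ → ℝ)
    (hk : 2 ≤ k) (hμ : μ ∈ Set.Icc (0 : ℝ) k)
    (hf1 : ∀ j : ℕ, 1 ≤ j → j ≤ k - 1 →
      ∀ x ∈ Set.Ioc (1 / ((j : ℝ) + 1)) (1 / (j : ℝ)), f x = 1 / (j : ℝ))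
    (hf2 : ∀ x ∈ Set.Icc (0 : ℝ) (1 / (k : ℝ)), f x = μ * x) :
    (∀ z : ℕ → ℕ, IPcost k z < 1 →
      ∀ ε : ℝ, 0 < ε → ε ≤ 1 / IPcost k z - 1 →
        ∃ n : ℕ, ∃ X : Fin n → ℝ,
          (∀ i, X i ∈ Set.Icc (0 : ℝ) 1) ∧ (∑ i, X i) ≤ 1 ∧
          IPscore k μ z - μ * ε * IPcost k z ≤ ∑ i, f (X i)) ∧
    IPopt k μ ≤ LPopt f ∧ LPopt f = IPopt k μ := by
  have hf : IsHarmonicProfile k μ f := ⟨hf1, hf2⟩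
  have hk₀ : 0 < k := by omega
  have hopt := le_antisymm (hf.LPopt_le_IPopt hk₀ hμ.1) (hf.IPopt_le_LPopt hk₀ hμ.1)
  refine ⟨fun _ _ _ hε hεc ↦ ?_, hopt.ge, hopt⟩
  exact hf.exists_sum_ge_IPscore_sub hk₀ hμ.1 hε hεc
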